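/- Let A^{(1)}_1, …, A^{(1)}_m, A^{(2)}_1, …, A^{(2)}_m ∈ M_d(ℂ) and let {B^{(1)}_α}_{α=1}^m and {B^{(2)}_β}_{β=1}^m be families in M_d(ℂ), each orthonormal with respect to the Hilbert–Schmidt inner product. On ℂ^d ⊗ ℂ^d ⊗ ℂ^d, define Q̃_1 = Σ_α A^{(1)}_α ⊗ B^{(1)}_α ⊗ I_d (acting on tensor factors 1 and 2) and Q̃_2 = Σ_β A^{(2)}_β ⊗ I_d ⊗ B^{(2)}_β (acting on tensor factors 1 and 3). Then ‖[Q̃_1, Q̃_2]‖_F² = Σ_{α,β} ‖[A^{(1)}_α, A^{(2)}_β]‖_F². -/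

import Mathlib

/-!
The `B`'s act on different tensor factors and commute, so `[Q̃₁, Q̃₂]` is
`Σ_{α,β} [A⁽¹⁾_α, A⁽²⁾_β] ⊗ B⁽¹⁾_α ⊗ B⁽²⁾_β`. The Hilbert–Schmidt inner product is multiplicative
on Kronecker products, so orthonormality of the two `B` families kills all cross terms of
`‖[Q̃₁, Q̃₂]‖_F²`, leaving the diagonal ones `‖[A⁽¹⁾_α, A⁽²⁾_β]‖_F²`.
-/

open Matrix Finset
open scoped Kronecker ComplexOrder

noncomputable def hsInner {n : Type*} [Fintype n] (A B : Matrix n n ℂ) : ℂ :=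
  Matrix.trace (Aᴴ * B)

noncomputable def frob {n : Type*} [Fintype n] (A : Matrix n n ℂ) : ℝ :=
  Real.sqrt (Matrix.trace (Aᴴ * A)).re

section Kronecker

variable {R ι κ l m n p : Type*} [CommRing R]

theorem Matrix.sum_kronecker (s : Finset ι) (A : ι → Matrix l m R) (B : Matrix n p R) :
    (∑ i ∈ s, A i) ⊗ₖ B = ∑ i ∈ s, A i ⊗ₖ B :=
  map_sum ((kroneckerBilinear (R := R) (α := R)).flip B) A s

theorem Matrix.sub_kronecker (A₁ A₂ : Matrix l m R) (B : Matrix n p R) :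
    (A₁ - A₂) ⊗ₖ B = A₁ ⊗ₖ B - A₂ ⊗ₖ B :=
  map_sub ((kroneckerBilinear (R := R) (α := R)).flip B) A₁ A₂

theorem commutator_sum_kronecker_one_sum_one_kronecker [Fintype ι] [Fintype κ] [Fintype l]
    [Fintype n] [Fintype p] [DecidableEq n] [DecidableEq p]
    (A : ι → Matrix l l R) (A' : κ → Matrix l l R) (B : ι → Matrix n n R) (B' : κ → Matrix p p R) :
    (∑ i, (A i ⊗ₖ B i) ⊗ₖ (1 : Matrix p p R)) * (∑ j, (A' j ⊗ₖ (1 : Matrix n n R)) ⊗ₖ B' j) -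
        (∑ j, (A' j ⊗ₖ (1 : Matrix n n R)) ⊗ₖ B' j) * (∑ i, (A i ⊗ₖ B i) ⊗ₖ (1 : Matrix p p R)) =
      ∑ j, (∑ i, (A i * A' j - A' j * A i) ⊗ₖ B i) ⊗ₖ B' j := by
  rw [sum_mul_sum, sum_mul_sum, sum_comm (s := univ) (t := univ), ← sum_sub_distrib]
  refine sum_congr rfl fun j _ => ?_
  rw [← sum_sub_distrib, sum_kronecker]
  refine sum_congr rfl fun i _ => ?_
  simp only [← mul_kronecker_mul, Matrix.mul_one, Matrix.one_mul, sub_kronecker]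

end Kronecker

section HilbertSchmidt

variable {ι l n : Type*} [Fintype l] [Fintype n]

theorem hsInner_self_nonneg (A : Matrix n n ℂ) : 0 ≤ hsInner A A :=
  (posSemidef_conjTranspose_mul_self A).trace_nonneg

theorem frob_sq (A : Matrix n n ℂ) : frob A ^ 2 = (hsInner A A).re :=
  Real.sq_sqrt (Complex.nonneg_iff.1 (hsInner_self_nonneg A)).1

theorem hsInner_self_eq_one_of_frob_eq_one {A : Matrix n n ℂ} (h : frob A = 1) :
    hsInner A A = 1 := by
  have hre : (hsInner A A).re = 1 := by rw [← frob_sq, h, one_pow]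
  exact Complex.ext hre (Complex.nonneg_iff.1 (hsInner_self_nonneg A)).2.symm

theorem hsInner_sum_left (s : Finset ι) (A : ι → Matrix n n ℂ) (B : Matrix n n ℂ) :
    hsInner (∑ i ∈ s, A i) B = ∑ i ∈ s, hsInner (A i) B := by
  simp only [hsInner, conjTranspose_sum, Matrix.sum_mul, trace_sum]

theorem hsInner_sum_right (s : Finset ι) (A : Matrix n n ℂ) (B : ι → Matrix n n ℂ) :
    hsInner A (∑ i ∈ s, B i) = ∑ i ∈ s, hsInner A (B i) := by
  simp only [hsInner, Matrix.mul_sum, trace_sum]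

theorem hsInner_kronecker (A C : Matrix l l ℂ) (B D : Matrix n n ℂ) :
    hsInner (A ⊗ₖ B) (C ⊗ₖ D) = hsInner A C * hsInner B D := by
  rw [hsInner, conjTranspose_kronecker, ← mul_kronecker_mul, trace_kronecker, hsInner, hsInner]

theorem hsInner_sum_kronecker_of_orthonormal [Fintype ι] (X Y : ι → Matrix l l ℂ)
    (B : ι → Matrix n n ℂ) (hBo : ∀ i j, i ≠ j → hsInner (B i) (B j) = 0)
    (hBn : ∀ i, hsInner (B i) (B i) = 1) :
    hsInner (∑ i, X i ⊗ₖ B i) (∑ j, Y j ⊗ₖ B j) = ∑ i, hsInner (X i) (Y i) := by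
  classical
  have hB : ∀ i j, hsInner (B i) (B j) = if i = j then 1 else 0 := fun i j => by
    split_ifs with h
    · exact h ▸ hBn i
    · exact hBo i j h
  simp only [hsInner_sum_left, hsInner_sum_right, hsInner_kronecker, hB, mul_ite, mul_one,
    mul_zero, sum_ite_eq', mem_univ, if_true]

end HilbertSchmidt

/-- The Frobenius norm squared of the commutator of two overlapping 2-local
terms `Q̃_1 = Σ_α A^{(1)}_α ⊗ B^{(1)}_α ⊗ I` and
`Q̃_2 = Σ_β A^{(2)}_β ⊗ I ⊗ B^{(2)}_β` (with `{B^{(1)}_α}` and `{B^{(2)}_β}`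
orthonormal) equals `Σ_{α,β} ‖[A^{(1)}_α, A^{(2)}_β]‖_F²`. -/
theorem frob_sq_commutator_overlapping_terms (d m : ℕ)
    (A1 A2 B1 B2 : Fin m → Matrix (Fin d) (Fin d) ℂ)
    (hB1o : ∀ α β, α ≠ β → hsInner (B1 α) (B1 β) = 0)
    (hB1n : ∀ α, frob (B1 α) = 1)
    (hB2o : ∀ α β, α ≠ β → hsInner (B2 α) (B2 β) = 0)
    (hB2n : ∀ α, frob (B2 α) = 1) :
    (frob ((∑ α, (A1 α ⊗ₖ B1 α) ⊗ₖ (1 : Matrix (Fin d) (Fin d) ℂ)) *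
            (∑ β, (A2 β ⊗ₖ (1 : Matrix (Fin d) (Fin d) ℂ)) ⊗ₖ B2 β) -
           (∑ β, (A2 β ⊗ₖ (1 : Matrix (Fin d) (Fin d) ℂ)) ⊗ₖ B2 β) *
            (∑ α, (A1 α ⊗ₖ B1 α) ⊗ₖ (1 : Matrix (Fin d) (Fin d) ℂ)))) ^ 2 =
      ∑ α, ∑ β, (frob (A1 α * A2 β - A2 β * A1 α)) ^ 2 := by
  have hB1 := fun α => hsInner_self_eq_one_of_frob_eq_one (hB1n α)
  have hB2 := fun β => hsInner_self_eq_one_of_frob_eq_one (hB2n β)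
  rw [commutator_sum_kronecker_one_sum_one_kronecker, frob_sq,
    hsInner_sum_kronecker_of_orthonormal _ _ _ hB2o hB2]
  simp only [hsInner_sum_kronecker_of_orthonormal _ _ _ hB1o hB1, frob_sq, Complex.re_sum]
  exact sum_comm
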